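/- arXiv:2205.09347 — 3 statements merged into one kernel-verified Lean document; each statement's English description precedes it below -/
import Mathlib

section
/- Define L_GenBin = −(1/n) Σ_i log N(z_i | μ_{y_i}, I) + (1/(nC)) Σ_i Σ_{c=1}^C log N(z_i | μ_c, I) for balanced classes of size n_0 = n/C with unit-norm features z_i. Then L_GenBin equals, up to an additive constant independent of the z_i (depending only on n, C, d), the quantity (1/n) Σ_{i=1}^n [ −(1/n_0) Σ_{j: y_j = y_i} ⟨z_i, z_j⟩ + (1/((C−1) n_0)) Σ_{j: y_j ≠ y_i} ⟨z_i, z_j⟩ ] (up to a positive scalar multiple (C−1)/C). -/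
open Finset RealInnerProductSpace

noncomputable def gaussDensity {d : ℕ} (z μ : EuclideanSpace ℝ (Fin d)) : ℝ :=
  (2 * Real.pi) ^ (-(d : ℝ) / 2) * Real.exp (-‖z - μ‖ ^ 2 / 2)

theorem stmt_9 (d n C n₀ : ℕ) (hn₀ : 0 < n₀) (hC : 1 < C) (hn : n = C * n₀) :
    ∃ c₀ : ℝ, ∀ (z : Fin n → EuclideanSpace ℝ (Fin d)) (y : Fin n → Fin C)
      (μ : Fin C → EuclideanSpace ℝ (Fin d)),
      (∀ i, ‖z i‖ = 1) →
      (∀ c : Fin C, (Finset.univ.filter (fun i => y i = c)).card = n₀) →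
      (∀ c, μ c = (n₀ : ℝ)⁻¹ • ∑ i ∈ Finset.univ.filter (fun i => y i = c), z i) →
      (-(n : ℝ)⁻¹ * ∑ i, Real.log (gaussDensity (z i) (μ (y i)))
        + ((n : ℝ) * C)⁻¹ * ∑ i, ∑ c, Real.log (gaussDensity (z i) (μ c)))
      = (((C : ℝ) - 1) / C) *
          ((n : ℝ)⁻¹ * ∑ i,
            (-(n₀ : ℝ)⁻¹ * ∑ j ∈ Finset.univ.filter (fun j => y j = y i), ⟪z i, z j⟫
              + (((C : ℝ) - 1) * n₀)⁻¹ *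
                  ∑ j ∈ Finset.univ.filter (fun j => y j ≠ y i), ⟪z i, z j⟫))
        + c₀ := by
  refine ⟨0, ?_⟩
  intro z y μ hz hcard hμ
  have hn₀' : (n₀ : ℝ) ≠ 0 := Nat.cast_ne_zero.mpr hn₀.ne'
  have hC0 : (C : ℝ) ≠ 0 := Nat.cast_ne_zero.mpr (by omega)
  have hC1 : (C : ℝ) - 1 ≠ 0 := by
    have : (1 : ℝ) < (C : ℝ) := by exact_mod_cast hC
    linarith
  have hnR : (n : ℝ) = (C : ℝ) * n₀ := by rw [hn]; push_cast; ring
  set K : ℝ := -(d : ℝ) / 2 * Real.log (2 * Real.pi) with hK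
  have hlog : ∀ a b : EuclideanSpace ℝ (Fin d),
      Real.log (gaussDensity a b) = K - ‖a - b‖ ^ 2 / 2 := by
    intro a b
    unfold gaussDensity
    rw [Real.log_mul (by positivity) (Real.exp_ne_zero _),
      Real.log_rpow (by positivity), Real.log_exp, hK]
    ring
  set A : Fin n → ℝ := fun i => ∑ j ∈ univ.filter (fun j => y j = y i), ⟪z i, z j⟫ with hA
  set B : Fin n → ℝ := fun i => ∑ j, ⟪z i, z j⟫ with hB
  set W : ℝ := ∑ i, A i with hW
  set T : ℝ := ∑ i, B i with hT
  -- inner products with class means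
  have hinner : ∀ (x : EuclideanSpace ℝ (Fin d)) (c : Fin C),
      ⟪x, μ c⟫ = (n₀ : ℝ)⁻¹ * ∑ j ∈ univ.filter (fun j => y j = c), ⟪x, z j⟫ := by
    intro x c
    rw [hμ, real_inner_smul_right, inner_sum]
  -- squared norms of class means
  have hnormμ : ∀ c : Fin C, ‖μ c‖ ^ 2 =
      (n₀ : ℝ)⁻¹ * ((n₀ : ℝ)⁻¹ *
        ∑ i ∈ univ.filter (fun i => y i = c), ∑ j ∈ univ.filter (fun j => y j = c), ⟪z i, z j⟫) := by
    intro c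
    rw [← real_inner_self_eq_norm_sq]
    nth_rewrite 1 [hμ]
    rw [real_inner_smul_left, sum_inner]
    rw [show (∑ i ∈ univ.filter (fun i => y i = c), ⟪z i, μ c⟫)
        = ∑ i ∈ univ.filter (fun i => y i = c),
            (n₀ : ℝ)⁻¹ * ∑ j ∈ univ.filter (fun j => y j = c), ⟪z i, z j⟫ from
      Finset.sum_congr rfl fun i _ => hinner (z i) c]
    rw [← Finset.mul_sum]
  -- regrouping: sum over classes of within-class double sums equals W
  have hWgroup : (∑ c : Fin C, ∑ i ∈ univ.filter (fun i => y i = c),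
      ∑ j ∈ univ.filter (fun j => y j = c), ⟪z i, z j⟫) = W := by
    rw [hW]
    rw [← Finset.sum_fiberwise univ y A]
    refine Finset.sum_congr rfl fun c _ => Finset.sum_congr rfl fun i hi => ?_
    rw [hA]
    simp only [(Finset.mem_filter.mp hi).2]
  have hMsum : (∑ c : Fin C, ‖μ c‖ ^ 2) = (n₀ : ℝ)⁻¹ * ((n₀ : ℝ)⁻¹ * W) := by
    rw [Finset.sum_congr rfl (fun c _ => hnormμ c), ← Finset.mul_sum, ← Finset.mul_sum, hWgroup]
  -- sums of functions of labels
  have hcomp : ∀ g : Fin C → ℝ, (∑ i, g (y i)) = ∑ c, (n₀ : ℝ) * g c := by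
    intro g
    rw [← Finset.sum_fiberwise univ y (fun i => g (y i))]
    refine Finset.sum_congr rfl fun c _ => ?_
    rw [Finset.sum_congr rfl (fun i hi => by rw [(Finset.mem_filter.mp hi).2]),
      Finset.sum_const, hcard, nsmul_eq_mul]
  have e2 : (∑ i, ‖μ (y i)‖ ^ 2) = (n₀ : ℝ)⁻¹ * W := by
    rw [hcomp (fun c => ‖μ c‖ ^ 2), ← Finset.mul_sum, hMsum]
    field_simp
  -- first sum
  have hS1 : (∑ i, Real.log (gaussDensity (z i) (μ (y i))))
      = (n : ℝ) * (K - 1 / 2) + (n₀ : ℝ)⁻¹ * W - ((n₀ : ℝ)⁻¹ * W) / 2 := by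
    have e1 : ∀ i : Fin n, Real.log (gaussDensity (z i) (μ (y i)))
        = (K - 1 / 2) + (n₀ : ℝ)⁻¹ * A i - ‖μ (y i)‖ ^ 2 / 2 := by
      intro i
      rw [hlog, norm_sub_sq_real, hz, one_pow, hinner, hA]
      ring
    rw [Finset.sum_congr rfl fun i _ => e1 i, Finset.sum_sub_distrib,
      Finset.sum_add_distrib, Finset.sum_const, Finset.card_univ, Fintype.card_fin,
      nsmul_eq_mul, ← Finset.mul_sum, ← hW, ← Finset.sum_div, e2]
  -- second sum
  have hS2 : (∑ i, ∑ c, Real.log (gaussDensity (z i) (μ c)))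
      = (n : ℝ) * ((C : ℝ) * (K - 1 / 2) - ((n₀ : ℝ)⁻¹ * ((n₀ : ℝ)⁻¹ * W)) / 2)
        + (n₀ : ℝ)⁻¹ * T := by
    have e1 : ∀ i : Fin n, (∑ c, Real.log (gaussDensity (z i) (μ c)))
        = ((C : ℝ) * (K - 1 / 2) - ((n₀ : ℝ)⁻¹ * ((n₀ : ℝ)⁻¹ * W)) / 2)
          + (n₀ : ℝ)⁻¹ * B i := by
      intro i
      have e2' : ∀ c : Fin C, Real.log (gaussDensity (z i) (μ c))
          = (K - 1 / 2) + (n₀ : ℝ)⁻¹ * (∑ j ∈ univ.filter (fun j => y j = c), ⟪z i, z j⟫)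
            - ‖μ c‖ ^ 2 / 2 := by
        intro c
        rw [hlog, norm_sub_sq_real, hz, one_pow, hinner]
        ring
      have e3 : (∑ c, ∑ j ∈ univ.filter (fun j => y j = c), ⟪z i, z j⟫) = B i := by
        rw [hB]; exact Finset.sum_fiberwise univ y (fun j => ⟪z i, z j⟫)
      rw [Finset.sum_congr rfl fun c _ => e2' c, Finset.sum_sub_distrib,
        Finset.sum_add_distrib, Finset.sum_const, Finset.card_univ, Fintype.card_fin,
        nsmul_eq_mul, ← Finset.mul_sum, e3, ← Finset.sum_div, hMsum]
      ring
    rw [Finset.sum_congr rfl fun i _ => e1 i, Finset.sum_add_distrib, Finset.sum_const,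
      Finset.card_univ, Fintype.card_fin, nsmul_eq_mul, ← Finset.mul_sum, ← hT]
  -- right-hand side sum
  have hRHS : (∑ i, (-(n₀ : ℝ)⁻¹ * ∑ j ∈ univ.filter (fun j => y j = y i), ⟪z i, z j⟫
        + (((C : ℝ) - 1) * n₀)⁻¹ * ∑ j ∈ univ.filter (fun j => y j ≠ y i), ⟪z i, z j⟫))
      = -(n₀ : ℝ)⁻¹ * W + (((C : ℝ) - 1) * n₀)⁻¹ * (T - W) := by
    have e1 : ∀ i : Fin n, (-(n₀ : ℝ)⁻¹ * ∑ j ∈ univ.filter (fun j => y j = y i), ⟪z i, z j⟫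
        + (((C : ℝ) - 1) * n₀)⁻¹ * ∑ j ∈ univ.filter (fun j => y j ≠ y i), ⟪z i, z j⟫)
        = -(n₀ : ℝ)⁻¹ * A i + (((C : ℝ) - 1) * n₀)⁻¹ * (B i - A i) := by
      intro i
      have h2 : (∑ j ∈ univ.filter (fun j => y j ≠ y i), ⟪z i, z j⟫) = B i - A i := by
        have h3 := Finset.sum_filter_add_sum_filter_not univ (fun j => y j = y i)
          (fun j => ⟪z i, z j⟫)
        rw [hA, hB]
        simp only [ne_eq]
        linarith [h3]
      rw [h2, hA]
    rw [Finset.sum_congr rfl fun i _ => e1 i, Finset.sum_add_distrib,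
      ← Finset.mul_sum, ← Finset.mul_sum, ← hW, Finset.sum_sub_distrib, ← hW, ← hT]
  rw [hS1, hS2, hRHS, hnR]
  field_simp
  ring
end

section
/- (Proposition 1 of the paper.) Let z_1,...,z_n be unit vectors in R^d with balanced labels (C classes, n_0 = n/C each), let S_{ij} = ⟨z_i, z_j⟩, and define the Multi-Similarity loss without hard mining L_MS = (1/n) Σ_i { (1/α) log[1 + Σ_{j ∈ P_i} e^{−α(S_{ij}−λ)}] + (1/β) log[1 + Σ_{j ∈ N_i} e^{β(S_{ij}−λ)}] }, where P_i = {j : y_j = y_i} and N_i = {j : y_j ≠ y_i}, with α, β > 0 and λ ∈ R. Define L_GenBin = −(1/n) Σ_i log N(z_i|μ_{y_i}, I) + (1/(nC)) Σ_i Σ_c log N(z_i|μ_c, I), where μ_c is the empirical mean of class c. Then there exists a constant c_0 depending only on n, C, n_0, α, β, λ, d (not on the vectors z_i) and a positive scalar κ such that L_MS ≥ κ·L_GenBin + c_0. -/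
open Finset RealInnerProductSpace

lemma jensen_log {ι : Type*} (s : Finset ι) (hs : s.Nonempty) (x : ι → ℝ) :
    Real.log s.card + (s.card : ℝ)⁻¹ * ∑ j ∈ s, x j
      ≤ Real.log (1 + ∑ j ∈ s, Real.exp (x j)) := by
  have hm : (0:ℝ) < s.card := by exact_mod_cast Finset.card_pos.2 hs
  have hw : ∑ _j ∈ s, (s.card : ℝ)⁻¹ = 1 := by
    rw [Finset.sum_const, nsmul_eq_mul, mul_inv_cancel₀ hm.ne']
  have jensen := convexOn_exp.map_sum_le (t := s) (w := fun _ => (s.card:ℝ)⁻¹) (p := x)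
    (fun i _ => by positivity) hw (fun i _ => Set.mem_univ _)
  have h1 : (s.card:ℝ) * Real.exp ((s.card:ℝ)⁻¹ * ∑ j ∈ s, x j)
      ≤ ∑ j ∈ s, Real.exp (x j) := by
    have h2 : Real.exp ((s.card:ℝ)⁻¹ * ∑ j ∈ s, x j) ≤ (s.card:ℝ)⁻¹ * ∑ j ∈ s, Real.exp (x j) := by
      simpa [smul_eq_mul, Finset.mul_sum] using jensen
    calc (s.card:ℝ) * Real.exp ((s.card:ℝ)⁻¹ * ∑ j ∈ s, x j)
        ≤ (s.card:ℝ) * ((s.card:ℝ)⁻¹ * ∑ j ∈ s, Real.exp (x j)) :=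
          mul_le_mul_of_nonneg_left h2 hm.le
      _ = ∑ j ∈ s, Real.exp (x j) := by field_simp
  have h3 : (s.card:ℝ) * Real.exp ((s.card:ℝ)⁻¹ * ∑ j ∈ s, x j)
      ≤ 1 + ∑ j ∈ s, Real.exp (x j) := by linarith
  have h4 := Real.log_le_log (by positivity) h3
  rwa [Real.log_mul hm.ne' (Real.exp_ne_zero _), Real.log_exp] at h4

lemma log_gauss {d : ℕ} (a b : EuclideanSpace ℝ (Fin d)) :
    Real.log (gaussDensity a b)
      = Real.log ((2 * Real.pi) ^ (-(d : ℝ) / 2)) - ‖a - b‖ ^ 2 / 2 := by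
  unfold gaussDensity
  rw [Real.log_mul (Real.rpow_pos_of_pos (by positivity) _).ne' (Real.exp_ne_zero _),
    Real.log_exp]
  ring

theorem stmt_10 (d n C n₀ : ℕ) (hn₀ : 0 < n₀) (hC : 1 < C) (hn : n = C * n₀)
    (α β lam : ℝ) (hα : 0 < α) (hβ : 0 < β) :
    ∃ κ c₀ : ℝ, 0 < κ ∧
      ∀ (z : Fin n → EuclideanSpace ℝ (Fin d)) (y : Fin n → Fin C)
        (μ : Fin C → EuclideanSpace ℝ (Fin d)),
        (∀ i, ‖z i‖ = 1) →
        (∀ c : Fin C, (Finset.univ.filter (fun i => y i = c)).card = n₀) →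
        (∀ c, μ c = (n₀ : ℝ)⁻¹ • ∑ i ∈ Finset.univ.filter (fun i => y i = c), z i) →
        ((n : ℝ)⁻¹ * ∑ i,
          ((1 / α) * Real.log (1 + ∑ j ∈ Finset.univ.filter (fun j => y j = y i),
              Real.exp (-α * (⟪z i, z j⟫ - lam)))
            + (1 / β) * Real.log (1 + ∑ j ∈ Finset.univ.filter (fun j => y j ≠ y i),
                Real.exp (β * (⟪z i, z j⟫ - lam)))))
        ≥ κ * (-(n : ℝ)⁻¹ * ∑ i, Real.log (gaussDensity (z i) (μ (y i)))
            + ((n : ℝ) * C)⁻¹ * ∑ i, ∑ c, Real.log (gaussDensity (z i) (μ c)))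
          + c₀ := by
  have hC1 : (1:ℝ) < (C:ℝ) := by exact_mod_cast hC
  have hCpos : (0:ℝ) < C := by linarith
  have hC1pos : (0:ℝ) < (C:ℝ) - 1 := by linarith
  have hn₀R : (0:ℝ) < n₀ := by exact_mod_cast hn₀
  have hnN : 0 < n := by rw [hn]; positivity
  have hnR : (0:ℝ) < n := by exact_mod_cast hnN
  have hnCn₀ : (n:ℝ) = (C:ℝ) * n₀ := by exact_mod_cast congrArg Nat.cast hn
  set m : ℕ := n - n₀ with hm_def
  have hmn : n₀ ≤ n := by rw [hn]; nlinarith [Nat.one_le_iff_ne_zero.2 (by omega : C ≠ 0)]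
  have hmR : (m:ℝ) = ((C:ℝ) - 1) * n₀ := by
    rw [hm_def, Nat.cast_sub hmn, hnCn₀]; ring
  have hmpos : (0:ℝ) < m := by rw [hmR]; positivity
  refine ⟨(C:ℝ) / ((C:ℝ) - 1),
    (1/α) * Real.log n₀ + (1/β) * Real.log (((C:ℝ) - 1) * n₀), div_pos hCpos hC1pos, ?_⟩
  intro z y μ hz hcard hμ
  -- class sums
  have hS : ∀ c, ∑ i ∈ Finset.univ.filter (fun i => y i = c), z i = (n₀:ℝ) • μ c := by
    intro c
    rw [hμ c, smul_smul, mul_inv_cancel₀ hn₀R.ne', one_smul]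
  have hsum : ∑ i, z i = (n₀:ℝ) • ∑ c, μ c := by
    rw [← Finset.sum_fiberwise Finset.univ y (fun i => z i)]
    rw [Finset.smul_sum]
    exact Finset.sum_congr rfl fun c _ => hS c
  set M : ℝ := ∑ c, ‖μ c‖ ^ 2 with hM_def
  set T : ℝ := ‖∑ c, μ c‖ ^ 2 with hT_def
  have hZM : ∑ i, ⟪z i, μ (y i)⟫ = (n₀:ℝ) * M := by
    rw [← Finset.sum_fiberwise Finset.univ y (fun i => ⟪z i, μ (y i)⟫)]
    rw [hM_def, Finset.mul_sum]
    refine Finset.sum_congr rfl fun c _ => ?_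
    have h1 : ∑ i ∈ Finset.univ.filter (fun i => y i = c), ⟪z i, μ (y i)⟫
        = ∑ i ∈ Finset.univ.filter (fun i => y i = c), ⟪z i, μ c⟫ :=
      Finset.sum_congr rfl fun i hi => by rw [(Finset.mem_filter.1 hi).2]
    rw [h1, ← sum_inner, hS c, real_inner_smul_left, real_inner_self_eq_norm_sq]
  have hMy : ∑ i, ‖μ (y i)‖ ^ 2 = (n₀:ℝ) * M := by
    rw [← Finset.sum_fiberwise Finset.univ y (fun i => ‖μ (y i)‖ ^ 2)]
    rw [hM_def, Finset.mul_sum]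
    refine Finset.sum_congr rfl fun c _ => ?_
    have h1 : ∑ i ∈ Finset.univ.filter (fun i => y i = c), ‖μ (y i)‖ ^ 2
        = ∑ i ∈ Finset.univ.filter (fun i => y i = c), ‖μ c‖ ^ 2 :=
      Finset.sum_congr rfl fun i hi => by rw [(Finset.mem_filter.1 hi).2]
    rw [h1, Finset.sum_const, hcard c, nsmul_eq_mul]
  have hZc : ∀ c, ∑ i, ⟪z i, μ c⟫ = (n₀:ℝ) * ⟪∑ c', μ c', μ c⟫ := by
    intro c
    rw [← sum_inner, hsum, real_inner_smul_left]
  -- norm expansions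
  have hexp : ∀ (i : Fin n) (c : Fin C), ‖z i - μ c‖ ^ 2 = 1 - 2 * ⟪z i, μ c⟫ + ‖μ c‖ ^ 2 := by
    intro i c
    rw [norm_sub_sq_real, hz i]; ring
  have hN1 : ∑ i, ‖z i - μ (y i)‖ ^ 2 = (n:ℝ) - (n₀:ℝ) * M := by
    have : ∀ i : Fin n, ‖z i - μ (y i)‖ ^ 2 = 1 - 2 * ⟪z i, μ (y i)⟫ + ‖μ (y i)‖ ^ 2 :=
      fun i => hexp i (y i)
    rw [Finset.sum_congr rfl (fun i _ => this i)]
    rw [Finset.sum_add_distrib, Finset.sum_sub_distrib, ← Finset.mul_sum, hZM, hMy,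
      Finset.sum_const, Finset.card_univ, Fintype.card_fin, nsmul_eq_mul, mul_one]
    ring
  have hN2 : ∑ i, ∑ c, ‖z i - μ c‖ ^ 2 = (n:ℝ) * C - 2 * (n₀:ℝ) * T + (n:ℝ) * M := by
    rw [Finset.sum_comm]
    have hc : ∀ c : Fin C, ∑ i, ‖z i - μ c‖ ^ 2
        = (n:ℝ) - 2 * ((n₀:ℝ) * ⟪∑ c', μ c', μ c⟫) + (n:ℝ) * ‖μ c‖ ^ 2 := by
      intro c
      rw [Finset.sum_congr rfl (fun i _ => hexp i c),
        Finset.sum_add_distrib, Finset.sum_sub_distrib, ← Finset.mul_sum, hZc c,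
        Finset.sum_const, Finset.sum_const, Finset.card_univ, Fintype.card_fin,
        nsmul_eq_mul, nsmul_eq_mul, mul_one]
    rw [Finset.sum_congr rfl (fun c _ => hc c)]
    rw [Finset.sum_add_distrib, Finset.sum_sub_distrib, ← Finset.mul_sum, ← Finset.mul_sum,
      ← Finset.mul_sum, ← inner_sum, real_inner_self_eq_norm_sq, ← hT_def,
      Finset.sum_const, Finset.card_univ, Fintype.card_fin, nsmul_eq_mul, ← hM_def]
    ring
  -- value of GenBin
  set K : ℝ := Real.log ((2 * Real.pi) ^ (-(d : ℝ) / 2)) with hK_def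
  have hGB : -(n : ℝ)⁻¹ * ∑ i, Real.log (gaussDensity (z i) (μ (y i)))
      + ((n : ℝ) * C)⁻¹ * ∑ i, ∑ c, Real.log (gaussDensity (z i) (μ c))
      = T / (C:ℝ)^2 - M / C := by
    have e1 : ∑ i, Real.log (gaussDensity (z i) (μ (y i)))
        = (n:ℝ) * K - (∑ i, ‖z i - μ (y i)‖ ^ 2) / 2 := by
      rw [Finset.sum_congr rfl (fun i _ => log_gauss (z i) (μ (y i))),
        Finset.sum_sub_distrib, Finset.sum_const, Finset.card_univ, Fintype.card_fin,
        nsmul_eq_mul, ← Finset.sum_div]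
    have e2 : ∑ i, ∑ c, Real.log (gaussDensity (z i) (μ c))
        = (n:ℝ) * C * K - (∑ i, ∑ c, ‖z i - μ c‖ ^ 2) / 2 := by
      have e2' : ∀ i : Fin n, ∑ c, Real.log (gaussDensity (z i) (μ c))
          = (C:ℝ) * K - (∑ c, ‖z i - μ c‖ ^ 2) / 2 := by
        intro i
        rw [Finset.sum_congr rfl (fun c _ => log_gauss (z i) (μ c)),
          Finset.sum_sub_distrib, Finset.sum_const, Finset.card_univ, Fintype.card_fin,
          nsmul_eq_mul, ← Finset.sum_div]
      rw [Finset.sum_congr rfl (fun i _ => e2' i), Finset.sum_sub_distrib,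
        Finset.sum_const, Finset.card_univ, Fintype.card_fin, nsmul_eq_mul, ← Finset.sum_div]
      ring
    rw [e1, e2, hN1, hN2, hnCn₀]
    field_simp
    ring
  -- inner-product sums A and B
  set A : Fin n → ℝ := fun i => ∑ j ∈ Finset.univ.filter (fun j => y j = y i), ⟪z i, z j⟫
    with hA_def
  set B : Fin n → ℝ := fun i => ∑ j ∈ Finset.univ.filter (fun j => y j ≠ y i), ⟪z i, z j⟫
    with hB_def
  have hA : ∀ i, A i = (n₀:ℝ) * ⟪z i, μ (y i)⟫ := by
    intro i
    rw [hA_def]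
    simp only
    rw [← inner_sum, hS (y i), real_inner_smul_right]
  have hP : ∑ i, A i = (n₀:ℝ)^2 * M := by
    rw [Finset.sum_congr rfl (fun i _ => hA i), ← Finset.mul_sum, hZM]; ring
  have hPQ : ∑ i, (A i + B i) = (n₀:ℝ)^2 * T := by
    have h1 : ∀ i : Fin n, A i + B i = ⟪z i, ∑ j, z j⟫ := by
      intro i
      rw [hA_def, hB_def]
      simp only
      rw [inner_sum]
      exact Finset.sum_filter_add_sum_filter_not Finset.univ (fun j => y j = y i) _
    rw [Finset.sum_congr rfl (fun i _ => h1 i), ← sum_inner, hsum, real_inner_smul_left,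
      real_inner_smul_right, real_inner_self_eq_norm_sq, ← hT_def]
    ring
  have hQ : ∑ i, B i = (n₀:ℝ)^2 * T - (n₀:ℝ)^2 * M := by
    have := hPQ
    rw [Finset.sum_add_distrib, hP] at this
    linarith
  -- cardinality of the negative set
  have hcardm : ∀ i, (Finset.univ.filter (fun j => y j ≠ y i)).card = m := by
    intro i
    have h1 := Finset.card_filter_add_card_filter_not
      (s := (Finset.univ : Finset (Fin n))) (p := fun j => y j = y i)
    rw [hcard (y i), Finset.card_univ, Fintype.card_fin] at h1
    simp only [ne_eq, hm_def]
    omega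
  -- per-index Jensen bounds
  have key1 : ∀ i : Fin n,
      (1/α) * Real.log n₀ + lam - (n₀:ℝ)⁻¹ * A i
        ≤ (1 / α) * Real.log (1 + ∑ j ∈ Finset.univ.filter (fun j => y j = y i),
            Real.exp (-α * (⟪z i, z j⟫ - lam))) := by
    intro i
    have hne : (Finset.univ.filter (fun j => y j = y i)).Nonempty :=
      Finset.card_pos.1 (by rw [hcard (y i)]; exact hn₀)
    have J := jensen_log _ hne (fun j => -α * (⟪z i, z j⟫ - lam))
    rw [hcard (y i)] at J
    have hsx : ∑ j ∈ Finset.univ.filter (fun j => y j = y i), (-α * (⟪z i, z j⟫ - lam))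
        = -α * A i + (n₀:ℝ) * (α * lam) := by
      have h2 : ∀ j ∈ Finset.univ.filter (fun j => y j = y i),
          -α * (⟪z i, z j⟫ - lam) = -α * ⟪z i, z j⟫ + α * lam := fun j _ => by ring
      rw [Finset.sum_congr rfl h2, Finset.sum_add_distrib, ← Finset.mul_sum,
        Finset.sum_const, hcard (y i), nsmul_eq_mul, hA_def]
    rw [hsx] at J
    have J2 := mul_le_mul_of_nonneg_left J (le_of_lt (by positivity : (0:ℝ) < 1/α))
    calc (1/α) * Real.log n₀ + lam - (n₀:ℝ)⁻¹ * A i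
        = (1/α) * (Real.log n₀ + (n₀:ℝ)⁻¹ * (-α * A i + (n₀:ℝ) * (α * lam))) := by
          field_simp; ring
      _ ≤ _ := J2
  have key2 : ∀ i : Fin n,
      (1/β) * Real.log (((C:ℝ) - 1) * n₀) - lam + (m:ℝ)⁻¹ * B i
        ≤ (1 / β) * Real.log (1 + ∑ j ∈ Finset.univ.filter (fun j => y j ≠ y i),
            Real.exp (β * (⟪z i, z j⟫ - lam))) := by
    intro i
    have hne : (Finset.univ.filter (fun j => y j ≠ y i)).Nonempty :=
      Finset.card_pos.1 (by rw [hcardm i]; exact_mod_cast hmpos)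
    have J := jensen_log _ hne (fun j => β * (⟪z i, z j⟫ - lam))
    rw [hcardm i] at J
    have hsx : ∑ j ∈ Finset.univ.filter (fun j => y j ≠ y i), (β * (⟪z i, z j⟫ - lam))
        = β * B i - (m:ℝ) * (β * lam) := by
      have h2 : ∀ j ∈ Finset.univ.filter (fun j => y j ≠ y i),
          β * (⟪z i, z j⟫ - lam) = β * ⟪z i, z j⟫ - β * lam := fun j _ => by ring
      rw [Finset.sum_congr rfl h2, Finset.sum_sub_distrib, ← Finset.mul_sum,
        Finset.sum_const, hcardm i, nsmul_eq_mul, hB_def]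
    rw [hsx] at J
    have J2 := mul_le_mul_of_nonneg_left J (le_of_lt (by positivity : (0:ℝ) < 1/β))
    calc (1/β) * Real.log (((C:ℝ) - 1) * n₀) - lam + (m:ℝ)⁻¹ * B i
        = (1/β) * (Real.log m + (m:ℝ)⁻¹ * (β * B i - (m:ℝ) * (β * lam))) := by
          rw [hmR]; field_simp; ring
      _ ≤ _ := J2
  -- sum the bounds
  set c' : ℝ := (1/α) * Real.log n₀ + (1/β) * Real.log (((C:ℝ) - 1) * n₀) with hc'_def
  have hsum_ge : ∑ i, (c' - (n₀:ℝ)⁻¹ * A i + (m:ℝ)⁻¹ * B i)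
      ≤ ∑ i, ((1 / α) * Real.log (1 + ∑ j ∈ Finset.univ.filter (fun j => y j = y i),
              Real.exp (-α * (⟪z i, z j⟫ - lam)))
            + (1 / β) * Real.log (1 + ∑ j ∈ Finset.univ.filter (fun j => y j ≠ y i),
                Real.exp (β * (⟪z i, z j⟫ - lam)))) := by
    refine Finset.sum_le_sum fun i _ => ?_
    have := add_le_add (key1 i) (key2 i)
    calc c' - (n₀:ℝ)⁻¹ * A i + (m:ℝ)⁻¹ * B i
        = ((1/α) * Real.log n₀ + lam - (n₀:ℝ)⁻¹ * A i)
          + ((1/β) * Real.log (((C:ℝ) - 1) * n₀) - lam + (m:ℝ)⁻¹ * B i) := by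
          rw [hc'_def]; ring
      _ ≤ _ := this
  have hsum_val : ∑ i, (c' - (n₀:ℝ)⁻¹ * A i + (m:ℝ)⁻¹ * B i)
      = (n:ℝ) * c' - (n₀:ℝ)⁻¹ * ((n₀:ℝ)^2 * M)
        + (m:ℝ)⁻¹ * ((n₀:ℝ)^2 * T - (n₀:ℝ)^2 * M) := by
    rw [Finset.sum_add_distrib, Finset.sum_sub_distrib, ← Finset.mul_sum, ← Finset.mul_sum,
      hP, hQ, Finset.sum_const, Finset.card_univ, Fintype.card_fin, nsmul_eq_mul]
  -- final arithmetic
  rw [ge_iff_le, hGB]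
  have hle : (n:ℝ)⁻¹ * ∑ i, (c' - (n₀:ℝ)⁻¹ * A i + (m:ℝ)⁻¹ * B i)
      ≤ (n:ℝ)⁻¹ * ∑ i, ((1 / α) * Real.log (1 + ∑ j ∈ Finset.univ.filter (fun j => y j = y i),
              Real.exp (-α * (⟪z i, z j⟫ - lam)))
            + (1 / β) * Real.log (1 + ∑ j ∈ Finset.univ.filter (fun j => y j ≠ y i),
                Real.exp (β * (⟪z i, z j⟫ - lam)))) :=
    mul_le_mul_of_nonneg_left hsum_ge (by positivity)
  refine le_trans (le_of_eq ?_) hle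
  rw [hsum_val, hmR, hnCn₀, hc'_def]
  field_simp
  ring
end

section
/- For balanced classes of unit vectors, the lower bound on the MS loss from Jensen's inequality is, up to additive constants, (1/n) Σ_{i=1}^n [ −(1/n_0) Σ_{j: y_j = y_i} S_{ij} + (1/((C−1) n_0)) Σ_{j: y_j ≠ y_i} S_{ij} ], i.e., L_MS ≥ (1/n) Σ_i { (λ + (log n_0)/α − (1/n_0) Σ_{j ∈ P_i} S_{ij}) + (−λ + (log((C−1)n_0))/β + (1/((C−1)n_0)) Σ_{j ∈ N_i} S_{ij}) }. -/
open Finset RealInnerProductSpace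


lemma jensen_exp {ι : Type*} (s : Finset ι) (hs : s.Nonempty) (x : ι → ℝ) :
    (s.card : ℝ) * Real.exp ((∑ j ∈ s, x j) / s.card) ≤ ∑ j ∈ s, Real.exp (x j) := by
  have hm : (0:ℝ) < s.card := by exact_mod_cast Finset.card_pos.mpr hs
  have h := ConvexOn.map_sum_le (convexOn_exp) (t := s) (w := fun _ => (s.card : ℝ)⁻¹)
    (p := x) (fun i _ => by positivity)
    (by rw [Finset.sum_const, nsmul_eq_mul]; field_simp) (fun i _ => Set.mem_univ _)
  simp only [smul_eq_mul, ← Finset.mul_sum] at h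
  rw [inv_mul_eq_div] at h
  have h2 : (↑s.card)⁻¹ * (∑ j ∈ s, Real.exp (x j)) = (∑ j ∈ s, Real.exp (x j)) / s.card := by
    ring
  rw [h2] at h
  calc (s.card : ℝ) * Real.exp ((∑ j ∈ s, x j) / s.card)
      ≤ s.card * ((∑ j ∈ s, Real.exp (x j)) / s.card) :=
        mul_le_mul_of_nonneg_left h hm.le
    _ = ∑ j ∈ s, Real.exp (x j) := by field_simp

lemma key {ι : Type*} (s : Finset ι) (hs : s.Nonempty) (α lam : ℝ) (hα : 0 < α) (S : ι → ℝ) :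
    lam + Real.log s.card / α - (s.card:ℝ)⁻¹ * ∑ j ∈ s, S j
      ≤ (1/α) * Real.log (1 + ∑ j ∈ s, Real.exp (-α * (S j - lam))) := by
  have hm : (0:ℝ) < s.card := by exact_mod_cast Finset.card_pos.mpr hs
  have hj := jensen_exp s hs (fun j => -α * (S j - lam))
  have hpos : (0:ℝ) < (s.card : ℝ) * Real.exp ((∑ j ∈ s, -α * (S j - lam)) / s.card) := by
    positivity
  have h1 : (s.card : ℝ) * Real.exp ((∑ j ∈ s, -α * (S j - lam)) / s.card)
      ≤ 1 + ∑ j ∈ s, Real.exp (-α * (S j - lam)) := by linarith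
  have hlog := Real.log_le_log hpos h1
  rw [Real.log_mul hm.ne' (Real.exp_ne_zero _), Real.log_exp] at hlog
  have hsum : (∑ j ∈ s, -α * (S j - lam)) = -α * ((∑ j ∈ s, S j) - s.card * lam) := by
    rw [← Finset.mul_sum, Finset.sum_sub_distrib, Finset.sum_const, nsmul_eq_mul]
  rw [hsum] at hlog
  have h2 := mul_le_mul_of_nonneg_left hlog (by positivity : (0:ℝ) ≤ 1/α)
  refine le_trans (le_of_eq ?_) h2
  field_simp
  ring

theorem stmt_11 {d n C n₀ : ℕ} (hn₀ : 0 < n₀) (hC : 1 < C) (hn : n = C * n₀)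
    (α β lam : ℝ) (hα : 0 < α) (hβ : 0 < β)
    (z : Fin n → EuclideanSpace ℝ (Fin d)) (hz : ∀ i, ‖z i‖ = 1)
    (y : Fin n → Fin C)
    (hbal : ∀ c : Fin C, (Finset.univ.filter (fun i => y i = c)).card = n₀) :
    (n : ℝ)⁻¹ * ∑ i,
        ((1 / α) * Real.log (1 + ∑ j ∈ Finset.univ.filter (fun j => y j = y i),
            Real.exp (-α * (⟪z i, z j⟫ - lam)))
          + (1 / β) * Real.log (1 + ∑ j ∈ Finset.univ.filter (fun j => y j ≠ y i),
              Real.exp (β * (⟪z i, z j⟫ - lam))))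
      ≥ (n : ℝ)⁻¹ * ∑ i,
          ((lam + Real.log n₀ / α
              - (n₀ : ℝ)⁻¹ * ∑ j ∈ Finset.univ.filter (fun j => y j = y i), ⟪z i, z j⟫)
            + (-lam + Real.log (((C : ℝ) - 1) * n₀) / β
                + (((C : ℝ) - 1) * n₀)⁻¹ *
                    ∑ j ∈ Finset.univ.filter (fun j => y j ≠ y i), ⟪z i, z j⟫)) := by
  have hnpos : 0 < n := by rw [hn]; positivity
  apply mul_le_mul_of_nonneg_left _ (by positivity : (0:ℝ) ≤ (n:ℝ)⁻¹)
  apply Finset.sum_le_sum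
  intro i _
  set P := Finset.univ.filter (fun j => y j = y i) with hP
  set N := Finset.univ.filter (fun j => y j ≠ y i) with hN
  have hPcard : P.card = n₀ := hbal (y i)
  have hNcard : N.card = n - n₀ := by
    have : N = Pᶜ := by
      ext j; simp [hP, hN]
    rw [this, Finset.card_compl, hPcard]
    simp
  have hNcardR : (N.card : ℝ) = ((C:ℝ) - 1) * n₀ := by
    rw [hNcard, hn, Nat.cast_sub (Nat.le_mul_of_pos_left n₀ (by omega))]
    push_cast; ring
  have hPne : P.Nonempty := Finset.card_pos.mp (by rw [hPcard]; exact hn₀)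
  have hNne : N.Nonempty := by
    apply Finset.card_pos.mp
    rw [hNcard, hn]
    have h2C := Nat.mul_le_mul_right n₀ (show 2 ≤ C by omega)
    omega
  have h1 := key P hPne α lam hα (fun j => ⟪z i, z j⟫)
  rw [hPcard] at h1
  have h2 := key N hNne β (-lam) hβ (fun j => -⟪z i, z j⟫)
  rw [hNcardR] at h2
  have harg : ∀ j, Real.exp (-β * (-⟪z i, z j⟫ - -lam)) = Real.exp (β * (⟪z i, z j⟫ - lam)) := by
    intro j; ring_nf
  simp only [harg] at h2
  have hneg : (∑ j ∈ N, -⟪z i, z j⟫) = -∑ j ∈ N, ⟪z i, z j⟫ := by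
    rw [Finset.sum_neg_distrib]
  rw [hneg] at h2
  rw [mul_neg, sub_neg_eq_add] at h2
  linarith
end
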